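/- arXiv:1302.4650 — 2 statements merged into one kernel-verified Lean document; each statement's English description precedes it below -/
import Mathlib

section
/- Let K be a number field of degree 2 over ℚ with ring of integers O_K. Let χ : ℕ → ℤ be a function satisfying χ(1) = 1, χ(m·n) = χ(m)·χ(n) for all m, n (complete multiplicativity), and, for every prime p: χ(p) = 1 if p splits in K, χ(p) = 0 if p ramifies in K, and χ(p) = −1 if p is inert in K. Then for every positive integer N, the set of nonzero ideals I of O_K with absolute norm N(I) = N is finite, and its cardinality ρ(N) equals Σ_{d ∣ N} χ(d), the sum of χ(d) over the positive divisors d of N. -/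
/-!
Both sides are multiplicative in `N`. For coprime `a, b`, an ideal `I` of norm `a b` divides
`(a) (b)`, hence is a product `J J'` with `J ∣ (a)` and `J' ∣ (b)`, which forces `N(J) = a` and
`N(J') = b`; and `J = J J' ⊔ (a)` recovers the factors. The divisor sum is the Dirichlet convolution
`1 * χ`, so it remains to compare prime powers. Since `N((p)) = p²`, the ideal `(p)` is `P Q`, `P²`
or prime, and an ideal of norm `p^k` divides `(p)^k`: it is one of the `k + 1` ideals `P^i Q^j`
with `i + j = k`, the single ideal `P^k`, or `(p)^(k/2)` when `k` is even. These counts are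
`Σ_{j ≤ k} χ(p)^j` for `χ(p) = 1, 0, -1`.
-/

open NumberField

theorem Nat.Coprime.eq_of_mul_eq_mul {a b c d : ℕ} (hcb : c.Coprime b) (hda : d.Coprime a)
    (h : c * d = a * b) : c = a :=
  Nat.dvd_antisymm (hcb.dvd_of_dvd_mul_right (h ▸ Dvd.intro d rfl))
    (hda.symm.dvd_of_dvd_mul_right (h ▸ Dvd.intro b rfl))

section PrimePowers

variable {M : Type*} [CommMonoidWithZero M] [IsCancelMulZero M] [Subsingleton Mˣ] {P Q : M}

theorem emultiplicity_pow_mul_pow (hP : Prime P) (hQ : Prime Q) (hPQ : P ≠ Q) (i j : ℕ) :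
    emultiplicity P (P ^ i * Q ^ j) = i := by
  have hPQj : ¬P ∣ Q ^ j := fun h =>
    hPQ (associated_iff_eq.mp (hP.associated_of_dvd hQ (hP.dvd_of_dvd_pow h)))
  rw [emultiplicity_mul hP, emultiplicity_pow_self_of_prime hP, emultiplicity_eq_zero.mpr hPQj,
    add_zero]

theorem pow_mul_pow_injective (hP : Prime P) (hQ : Prime Q) (hPQ : P ≠ Q) :
    Function.Injective fun ij : ℕ × ℕ => P ^ ij.1 * Q ^ ij.2 := by
  rintro ⟨i, j⟩ ⟨i', j'⟩ h
  simp only at h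
  have hi : (i : ℕ∞) = i' := by
    rw [← emultiplicity_pow_mul_pow hP hQ hPQ i j, h, emultiplicity_pow_mul_pow hP hQ hPQ]
  have hj : (j : ℕ∞) = j' := by
    rw [← emultiplicity_pow_mul_pow hQ hP hPQ.symm j i, mul_comm, h, mul_comm,
      emultiplicity_pow_mul_pow hQ hP hPQ.symm]
  exact Prod.ext (by exact_mod_cast hi) (by exact_mod_cast hj)

end PrimePowers

namespace Ideal

variable {S : Type*} [CommRing S] [IsDedekindDomain S] [Module.Free ℤ S]

theorem dvd_span_natCast_pow_of_absNorm_eq {I : Ideal S} {p k : ℕ} (hI : absNorm I = p ^ k) :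
    I ∣ span {(p : S)} ^ k := by
  rw [dvd_iff_le, span_singleton_pow, ← Nat.cast_pow, ← hI]
  exact span_singleton_absNorm_le I

theorem prime_of_absNorm_prime {I : Ideal S} (hI : (absNorm I).Prime) : Prime I :=
  (irreducible_of_irreducible_absNorm hI).prime

theorem ncard_setOf_absNorm_eq_pow_of_span_eq_pow {p e f : ℕ} (hp : p.Prime) (hf : f ≠ 0)
    {P : Ideal S} (hP : Prime P) (hpP : span {(p : S)} = P ^ e) (hPn : absNorm P = p ^ f)
    (k : ℕ) : {I : Ideal S | absNorm I = p ^ k}.ncard = if f ∣ k then 1 else 0 := by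
  have hmem : ∀ I : Ideal S, absNorm I = p ^ k ↔ ∃ i, f * i = k ∧ I = P ^ i := by
    refine fun I => ⟨fun hI => ?_, ?_⟩
    · have hdvd : I ∣ P ^ (e * k) := by
        rw [pow_mul, ← hpP]
        exact dvd_span_natCast_pow_of_absNorm_eq hI
      obtain ⟨i, -, hi⟩ := (dvd_prime_pow hP _).mp hdvd
      rw [associated_iff_eq] at hi
      subst hi
      refine ⟨i, Nat.pow_right_injective hp.two_le ?_, rfl⟩
      simp only [← hI, map_pow, hPn, pow_mul]
    · rintro ⟨i, rfl, rfl⟩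
      rw [map_pow, hPn, pow_mul]
  split_ifs with hfk
  · obtain ⟨i, rfl⟩ := hfk
    refine Set.ncard_eq_one.mpr ⟨P ^ i, Set.ext fun I => ?_⟩
    simp [hmem, mul_right_inj' hf]
  · convert Set.ncard_empty (Ideal S)
    refine Set.eq_empty_of_forall_notMem fun I hI => hfk ?_
    obtain ⟨i, rfl, -⟩ := (hmem I).mp hI
    exact Dvd.intro i rfl

open Finset.HasAntidiagonal in
theorem ncard_setOf_absNorm_eq_pow_of_span_eq_mul {p : ℕ} (hp : p.Prime) {P Q : Ideal S}
    (hP : Prime P) (hQ : Prime Q) (hPQ : P ≠ Q) (hpPQ : span {(p : S)} = P * Q)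
    (hPn : absNorm P = p) (hQn : absNorm Q = p) (k : ℕ) :
    {I : Ideal S | absNorm I = p ^ k}.ncard = k + 1 := by
  have hn : ∀ i j : ℕ, absNorm (P ^ i * Q ^ j) = p ^ (i + j) := by
    simp [hPn, hQn, pow_add]
  have hset : {I : Ideal S | absNorm I = p ^ k} =
      (fun ij : ℕ × ℕ => P ^ ij.1 * Q ^ ij.2) '' (antidiagonal k : Set (ℕ × ℕ)) := by
    refine Set.ext fun I => ⟨fun hI => ?_, ?_⟩
    · have hdvd : I ∣ P ^ k * Q ^ k := by
        rw [← mul_pow, ← hpPQ]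
        exact dvd_span_natCast_pow_of_absNorm_eq hI
      obtain ⟨J, J', hJ, hJ', rfl⟩ := dvd_mul.mp hdvd
      obtain ⟨i, -, hi⟩ := (dvd_prime_pow hP k).mp hJ
      obtain ⟨j, -, hj⟩ := (dvd_prime_pow hQ k).mp hJ'
      rw [associated_iff_eq] at hi hj
      subst hi hj
      exact ⟨(i, j), mem_antidiagonal.mpr
        (Nat.pow_right_injective hp.two_le ((hn i j).symm.trans hI)), rfl⟩
    · rintro ⟨⟨i, j⟩, hij, rfl⟩
      rw [Set.mem_ofPred_eq, hn, mem_antidiagonal.mp hij]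
  rw [hset, (pow_mul_pow_injective hP hQ hPQ).injOn.ncard_image, Set.ncard_coe_finset,
    Finset.Nat.card_antidiagonal]

variable [Module.Finite ℤ S]

theorem coprime_absNorm_of_dvd_span_natCast {J : Ideal S} {a b : ℕ} (hJ : J ∣ span {(a : S)})
    (hab : a.Coprime b) : (absNorm J).Coprime b :=
  Nat.Coprime.coprime_dvd_left (absNorm_span_natCast (S := S) a ▸ map_dvd absNorm hJ)
    (hab.pow_left _)

theorem sup_span_natCast_eq_top_of_coprime {J : Ideal S} {n : ℕ} (h : (absNorm J).Coprime n) :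
    J ⊔ span {(n : S)} = ⊤ :=
  absNorm_eq_one_iff.mp <| Nat.eq_one_of_dvd_coprimes (h.pow_right (Module.finrank ℤ S))
    (absNorm_dvd_absNorm_of_le le_sup_left)
    (absNorm_span_natCast (S := S) n ▸ absNorm_dvd_absNorm_of_le le_sup_right)

theorem mul_sup_span_natCast_eq {I J : Ideal S} {a b : ℕ} (hab : a.Coprime b)
    (hI : absNorm I = a) (hJ : absNorm J = b) : I * J ⊔ span {(a : S)} = I := by
  rw [mul_sup_eq_of_coprime_right (sup_span_natCast_eq_top_of_coprime (hJ ▸ hab.symm)),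
    sup_eq_left, ← hI]
  exact span_singleton_absNorm_le I

theorem exists_mul_eq_of_absNorm_eq_mul {I : Ideal S} {a b : ℕ} (hab : a.Coprime b)
    (hI : absNorm I = a * b) : ∃ J J' : Ideal S, absNorm J = a ∧ absNorm J' = b ∧ J * J' = I := by
  have hdvd : I ∣ span {(a : S)} * span {(b : S)} := by
    rw [dvd_iff_le, span_singleton_mul_span_singleton, ← Nat.cast_mul, ← hI]
    exact span_singleton_absNorm_le I
  obtain ⟨J, J', hJ, hJ', rfl⟩ := dvd_mul.mp hdvd
  have hJb := coprime_absNorm_of_dvd_span_natCast hJ hab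
  have hJ'a := coprime_absNorm_of_dvd_span_natCast hJ' hab.symm
  rw [map_mul] at hI
  exact ⟨J, J', hJb.eq_of_mul_eq_mul hJ'a hI,
    hJ'a.eq_of_mul_eq_mul hJb (by rw [mul_comm, hI, mul_comm]), rfl⟩

theorem ncard_setOf_absNorm_eq_mul {a b : ℕ} (hab : a.Coprime b) :
    {I : Ideal S | absNorm I = a * b}.ncard =
      {I : Ideal S | absNorm I = a}.ncard * {I : Ideal S | absNorm I = b}.ncard := by
  have hbij : Set.BijOn (fun J : Ideal S × Ideal S => J.1 * J.2)
      ({I | absNorm I = a} ×ˢ {I | absNorm I = b}) {I | absNorm I = a * b} := by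
    refine ⟨fun J ⟨hJ₁, hJ₂⟩ => ?_, fun J ⟨hJ₁, hJ₂⟩ J' ⟨hJ₁', hJ₂'⟩ h => ?_, fun I hI => ?_⟩
    · rw [Set.mem_ofPred_eq, map_mul, hJ₁, hJ₂]
    · simp only at h
      refine Prod.ext ?_ ?_
      · rw [← mul_sup_span_natCast_eq hab hJ₁ hJ₂, ← mul_sup_span_natCast_eq hab hJ₁' hJ₂', h]
      · rw [← mul_sup_span_natCast_eq hab.symm hJ₂ hJ₁,
          ← mul_sup_span_natCast_eq hab.symm hJ₂' hJ₁', mul_comm, h, mul_comm]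
    · obtain ⟨J, J', hJ, hJ', rfl⟩ := exists_mul_eq_of_absNorm_eq_mul hab hI
      exact ⟨(J, J'), ⟨hJ, hJ'⟩, rfl⟩
  rw [← hbij.image_eq, hbij.injOn.ncard_image, Set.ncard_prod]

variable (S) in
/-- Excluding `⊥` makes the value at `0` vanish, as an `ArithmeticFunction` must. -/
noncomputable def absNormCount : ArithmeticFunction ℕ :=
  ⟨fun n => {I : Ideal S | I ≠ ⊥ ∧ absNorm I = n}.ncard, by
    simp only [ne_eq, absNorm_eq_zero_iff, not_and_self_iff, Set.ofPred_false, Set.ncard_empty]⟩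

theorem absNormCount_apply {n : ℕ} (hn : n ≠ 0) :
    absNormCount S n = {I : Ideal S | absNorm I = n}.ncard := by
  change Set.ncard _ = _
  congr 1
  ext I
  refine and_iff_right_of_imp fun hI hbot => hn ?_
  rw [← hI, hbot, absNorm_bot]

theorem isMultiplicative_absNormCount : (absNormCount S).IsMultiplicative := by
  refine ⟨?_, fun {m n} hmn => ?_⟩
  · simp [absNormCount_apply one_ne_zero, absNorm_eq_one_iff]
  rcases eq_or_ne m 0 with rfl | hm
  · simp
  rcases eq_or_ne n 0 with rfl | hn
  · simp
  rw [absNormCount_apply (mul_ne_zero hm hn), absNormCount_apply hm, absNormCount_apply hn,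
    ncard_setOf_absNorm_eq_mul hmn]

theorem span_natCast_split_or_ramified_or_inert (hS : Module.finrank ℤ S = 2) {p : ℕ}
    (hp : p.Prime) :
    (∃ P Q : Ideal S, Prime P ∧ Prime Q ∧ P ≠ Q ∧ span {(p : S)} = P * Q ∧
      absNorm P = p ∧ absNorm Q = p) ∨
    (∃ P : Ideal S, Prime P ∧ span {(p : S)} = P ^ 2 ∧ absNorm P = p) ∨
    (Prime (span {(p : S)}) ∧ absNorm (span {(p : S)}) = p ^ 2) := by
  have hpn : absNorm (span {(p : S)}) = p ^ 2 := by rw [absNorm_span_natCast, hS]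
  have hne_top : span {(p : S)} ≠ ⊤ := fun h => by
    rw [h, absNorm_top] at hpn
    exact (Nat.one_lt_pow two_ne_zero hp.one_lt).ne hpn
  obtain ⟨P, hPmax, hle⟩ := exists_le_maximal _ hne_top
  obtain ⟨C, hC⟩ := dvd_iff_le.mpr hle
  have hPC : absNorm P * absNorm C = p ^ 2 := by rw [← map_mul, ← hC, hpn]
  obtain ⟨m, hm, hPm⟩ := (Nat.dvd_prime_pow hp).mp (Dvd.intro _ hPC)
  interval_cases m
  · exact absurd (absNorm_eq_one_iff.mp hPm) hPmax.ne_top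
  · rw [pow_one] at hPm
    have hCn : absNorm C = p := by
      rw [hPm, sq] at hPC
      exact Nat.eq_of_mul_eq_mul_left hp.pos hPC
    have hP := prime_of_absNorm_prime (hPm ▸ hp)
    have hQ := prime_of_absNorm_prime (hCn ▸ hp)
    by_cases hPeqC : P = C
    · subst hPeqC
      exact Or.inr (Or.inl ⟨P, hP, by rw [hC, sq], hPm⟩)
    · exact Or.inl ⟨P, C, hP, hQ, hPeqC, hC, hPm, hCn⟩
  · rw [hPm] at hPC
    have hCtop : C = ⊤ := absNorm_eq_one_iff.mp (Nat.eq_of_mul_eq_mul_left (pow_pos hp.pos 2)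
      (hPC.trans (mul_one _).symm))
    rw [hC, hCtop, mul_top]
    have hPbot : P ≠ ⊥ := fun h => pow_ne_zero 2 hp.ne_zero (by rw [← hPm, h, absNorm_bot])
    exact Or.inr (Or.inr ⟨prime_of_isPrime hPbot hPmax.isPrime, hPm⟩)

theorem absNormCount_prime_pow_eq_geom_sum (hS : Module.finrank ℤ S = 2) {p : ℕ} (hp : p.Prime)
    {c : ℤ}
    (hsplit : (∃ P Q : Ideal S, P.IsPrime ∧ Q.IsPrime ∧ P ≠ Q ∧ span {(p : S)} = P * Q) → c = 1)
    (hram : (∃ P : Ideal S, P.IsPrime ∧ span {(p : S)} = P ^ 2) → c = 0)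
    (hinert : (span {(p : S)}).IsPrime → c = -1) (k : ℕ) :
    (absNormCount S (p ^ k) : ℤ) = ∑ j ∈ Finset.range (k + 1), c ^ j := by
  rw [absNormCount_apply (pow_ne_zero k hp.ne_zero)]
  rcases span_natCast_split_or_ramified_or_inert hS hp with
    ⟨P, Q, hP, hQ, hPQ, hpPQ, hPn, hQn⟩ | ⟨P, hP, hpP, hPn⟩ | ⟨hp', hpn⟩
  · rw [ncard_setOf_absNorm_eq_pow_of_span_eq_mul hp hP hQ hPQ hpPQ hPn hQn,
      hsplit ⟨P, Q, isPrime_of_prime hP, isPrime_of_prime hQ, hPQ, hpPQ⟩]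
    simp
  · rw [ncard_setOf_absNorm_eq_pow_of_span_eq_pow hp one_ne_zero hP hpP
        (hPn.trans (pow_one p).symm), hram ⟨P, isPrime_of_prime hP, hpP⟩]
    simp
  · rw [ncard_setOf_absNorm_eq_pow_of_span_eq_pow hp two_ne_zero hp' (pow_one _).symm hpn,
      hinert (isPrime_of_prime hp'), neg_one_geom_sum]
    have hparity : Even (k + 1) ↔ ¬2 ∣ k := by rw [Nat.even_add_one, even_iff_two_dvd]
    by_cases hk : 2 ∣ k <;> simp [hk, hparity]

end Ideal

namespace ArithmeticFunction

open scoped ArithmeticFunction.zeta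

variable {R : Type*} [CommSemiring R]

theorem isMultiplicative_toArithmeticFunction (χ : ℕ →* R) :
    (toArithmeticFunction χ).IsMultiplicative := by
  refine ⟨by simp [toArithmeticFunction], fun {m n} _ => ?_⟩
  rcases eq_or_ne m 0 with rfl | hm
  · simp [toArithmeticFunction]
  rcases eq_or_ne n 0 with rfl | hn
  · simp [toArithmeticFunction]
  simp [toArithmeticFunction, hm, hn]

theorem coe_zeta_mul_toArithmeticFunction_apply (f : ℕ → R) (n : ℕ) :
    (ζ * toArithmeticFunction f) n = ∑ d ∈ n.divisors, f d := by
  rw [coe_zeta_mul_apply]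
  exact Finset.sum_congr rfl fun d hd => if_neg (Nat.pos_of_mem_divisors hd).ne'

theorem isMultiplicative_zeta_mul_toArithmeticFunction (χ : ℕ →* R) :
    (ζ * toArithmeticFunction χ : ArithmeticFunction R).IsMultiplicative :=
  isMultiplicative_zeta.natCast.mul (isMultiplicative_toArithmeticFunction χ)

theorem coe_zeta_mul_toArithmeticFunction_prime_pow (χ : ℕ →* R) {p : ℕ} (hp : p.Prime)
    (k : ℕ) : (ζ * toArithmeticFunction χ) (p ^ k) = ∑ j ∈ Finset.range (k + 1), χ p ^ j := by
  rw [coe_zeta_mul_toArithmeticFunction_apply, Nat.sum_divisors_prime_pow hp]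
  simp only [map_pow]

end ArithmeticFunction

open Ideal ArithmeticFunction in
open scoped ArithmeticFunction.zeta in
theorem card_ideals_of_norm_eq_sum_quadratic_character_general
    (K : Type*) [Field K] [NumberField K] (hdeg : Module.finrank ℚ K = 2)
    (χ : ℕ → ℤ) (hχ1 : χ 1 = 1) (hχmul : ∀ m n : ℕ, χ (m * n) = χ m * χ n)
    (hsplit : ∀ p : ℕ, p.Prime →
      (∃ P Q : Ideal (𝓞 K), P.IsPrime ∧ Q.IsPrime ∧ P ≠ Q ∧
        Ideal.span {(p : 𝓞 K)} = P * Q) → χ p = 1)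
    (hram : ∀ p : ℕ, p.Prime →
      (∃ P : Ideal (𝓞 K), P.IsPrime ∧ Ideal.span {(p : 𝓞 K)} = P ^ 2) → χ p = 0)
    (hinert : ∀ p : ℕ, p.Prime →
      (Ideal.span {(p : 𝓞 K)}).IsPrime → χ p = -1)
    (N : ℕ) :
    {I : Ideal (𝓞 K) | I ≠ ⊥ ∧ Ideal.absNorm I = N}.Finite ∧
      (({I : Ideal (𝓞 K) | I ≠ ⊥ ∧ Ideal.absNorm I = N}.ncard : ℤ) =
        ∑ d ∈ N.divisors, χ d) := by
  refine ⟨(finite_setOfPred_absNorm_eq N).subset fun I hI => hI.2, ?_⟩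
  let χ' : ℕ →* ℤ := ⟨⟨χ, hχ1⟩, hχmul⟩
  have hrank : Module.finrank ℤ (𝓞 K) = 2 := (RingOfIntegers.rank K).trans hdeg
  have key : (absNormCount (𝓞 K) : ArithmeticFunction ℤ) = ζ * toArithmeticFunction χ' := by
    refine (IsMultiplicative.eq_iff_eq_on_prime_powers _ isMultiplicative_absNormCount.natCast _
      (isMultiplicative_zeta_mul_toArithmeticFunction χ')).mpr fun p k hp => ?_
    rw [natCoe_apply, coe_zeta_mul_toArithmeticFunction_prime_pow χ' hp]
    exact absNormCount_prime_pow_eq_geom_sum hrank hp (hsplit p hp) (hram p hp) (hinert p hp) k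
  exact (natCoe_apply.symm.trans (congrArg (· N) key)).trans
    (coe_zeta_mul_toArithmeticFunction_apply χ' N)

/-- For a quadratic number field `K` and a completely multiplicative
function `χ : ℕ → ℤ` with `χ(p) = 1, 0, -1` according as the prime `p` is split,
ramified, or inert in `K`, the number `ρ(N)` of nonzero ideals of `O_K` of absolute
norm `N` is finite and equals `Σ_{d ∣ N} χ(d)`. -/
theorem card_ideals_of_norm_eq_sum_quadratic_character
    (K : Type*) [Field K] [NumberField K] (hdeg : Module.finrank ℚ K = 2)
    (χ : ℕ → ℤ) (hχ1 : χ 1 = 1) (hχmul : ∀ m n : ℕ, χ (m * n) = χ m * χ n)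
    (hsplit : ∀ p : ℕ, p.Prime →
      (∃ P Q : Ideal (𝓞 K), P.IsPrime ∧ Q.IsPrime ∧ P ≠ Q ∧
        Ideal.span {(p : 𝓞 K)} = P * Q) → χ p = 1)
    (hram : ∀ p : ℕ, p.Prime →
      (∃ P : Ideal (𝓞 K), P.IsPrime ∧ Ideal.span {(p : 𝓞 K)} = P ^ 2) → χ p = 0)
    (hinert : ∀ p : ℕ, p.Prime →
      (Ideal.span {(p : 𝓞 K)}).IsPrime → χ p = -1)
    (N : ℕ) (hN : 0 < N) :
    {I : Ideal (𝓞 K) | I ≠ ⊥ ∧ Ideal.absNorm I = N}.Finite ∧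
      (({I : Ideal (𝓞 K) | I ≠ ⊥ ∧ Ideal.absNorm I = N}.ncard : ℤ) =
        ∑ d ∈ N.divisors, χ d) :=
  card_ideals_of_norm_eq_sum_quadratic_character_general K hdeg χ hχ1 hχmul hsplit hram hinert N
end

section
/- Let M be an additive commutative group, F : ℕ → M a function (regarded as the coefficient sequence of a formal q-expansion), and D a squarefree positive integer with set of prime divisors P. For each nonempty subset I ⊆ P, let Φ_I(F) denote the result of applying the operators φ_p for p ∈ I successively to F (the order is immaterial since the φ_p commute pairwise for distinct primes). Then for every positive integer m: 2·F(m) + Σ_{∅ ≠ I ⊆ P} Φ_I(F)(m) = F(m) + F(m / gcd(m, D)). -/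
/-- The operator `φ_d = B_d ∘ (1 - U_d)` on coefficient sequences of formal
`q`-expansions: `φ_d(F)(n) = F(n/d) - F(n)` if `d ∣ n`, and `0` otherwise. -/
def phiOp {M : Type*} [AddCommGroup M] (d : ℕ) (F : ℕ → M) : ℕ → M :=
  fun n => if d ∣ n then F (n / d) - F n else 0

/-- `Φ_I`: the result of applying the operators `φ_p` for `p ∈ I` successively
(in increasing order of `p`; the order is immaterial since the `φ_p` commute
pairwise for distinct primes `p`). -/
def PhiSet {M : Type*} [AddCommGroup M] (I : Finset ℕ) (F : ℕ → M) : ℕ → M :=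
  (I.sort (· ≤ ·)).foldr (fun d G => phiOp d G) F

/-! For a prime `p`, `F + φ_p F` is `n ↦ F (n / gcd(n, p))`. The `φ_p` for distinct
primes commute, so `∑_{I ⊆ P} Φ_I = ∏_{p ∈ P} (1 + φ_p)`, and composing the maps
`n ↦ n / gcd(n, p)` over the primes of the squarefree `D` gives `n ↦ n / gcd(n, D)`.
The term `I = ∅` contributes the extra `F m`. -/

lemma Nat.div_gcd_mul_of_coprime {a b : ℕ} (h : a.Coprime b) (m : ℕ) :
    m / m.gcd (a * b) = m / m.gcd b / (m / m.gcd b).gcd a := by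
  set g := m.gcd b
  have hga : g.Coprime a := Nat.Coprime.coprime_dvd_left (m.gcd_dvd_right b) h.symm
  have hgcd : (m / g).gcd a = m.gcd a := by
    conv_rhs => rw [← Nat.mul_div_cancel' (m.gcd_dvd_left b)]
    exact (hga.gcd_mul_left_cancel _).symm
  rw [hgcd, Nat.div_div_eq_div_mul, h.gcd_mul, mul_comm]

section

variable {M : Type*} [AddCommGroup M]

lemma phiOp_comm {a b : ℕ} (h : a.Coprime b) (F : ℕ → M) :
    phiOp a (phiOp b F) = phiOp b (phiOp a F) := by
  funext n
  simp only [phiOp]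
  by_cases ha : a ∣ n <;> by_cases hb : b ∣ n
  · have hab : b ∣ n / a := (Nat.dvd_div_iff_mul_dvd ha).mpr (h.mul_dvd_of_dvd_of_dvd ha hb)
    have hba : a ∣ n / b :=
      (Nat.dvd_div_iff_mul_dvd hb).mpr (h.symm.mul_dvd_of_dvd_of_dvd hb ha)
    simp only [if_pos ha, if_pos hb, if_pos hab, if_pos hba, Nat.div_div_eq_div_mul, mul_comm b a]
    abel
  · have : ¬ b ∣ n / a := fun h' => hb (h'.trans (Nat.div_dvd_of_dvd ha))
    simp [ha, hb, this]
  · have : ¬ a ∣ n / b := fun h' => ha (h'.trans (Nat.div_dvd_of_dvd hb))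
    simp [ha, hb, this]
  · simp [ha, hb]

lemma PhiSet_empty (F : ℕ → M) : PhiSet ∅ F = F := by
  simp [PhiSet]

lemma PhiSet_insert {p : ℕ} {I : Finset ℕ} (hp : p ∉ I)
    (hI : (↑(insert p I) : Set ℕ).Pairwise Nat.Coprime) (F : ℕ → M) :
    PhiSet (insert p I) F = PhiSet I (phiOp p F) := by
  have hperm : ((insert p I).sort (· ≤ ·)).Perm (I.sort (· ≤ ·) ++ [p]) :=
    calc List.Perm ((insert p I).sort (· ≤ ·)) (insert p I).toList :=
          Finset.sort_perm_toList _ _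
      List.Perm _ (p :: I.toList) := Finset.toList_insert hp
      List.Perm _ (p :: I.sort (· ≤ ·)) := (I.sort_perm_toList _).symm.cons p
      List.Perm _ (I.sort (· ≤ ·) ++ [p]) := (List.perm_append_singleton p _).symm
  have hcomm : ∀ x ∈ (insert p I).sort (· ≤ ·), ∀ y ∈ (insert p I).sort (· ≤ ·),
      ∀ G : ℕ → M, phiOp y (phiOp x G) = phiOp x (phiOp y G) := by
    intro x hx y hy G
    rw [Finset.mem_sort] at hx hy
    obtain rfl | hxy := eq_or_ne x y
    · rfl
    · exact phiOp_comm (hI hy hx hxy.symm) G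
  rw [PhiSet, List.Perm.foldr_eq' hperm hcomm, List.foldr_append]
  rfl

lemma add_phiOp_apply {p : ℕ} (hp : p.Prime) (F : ℕ → M) (n : ℕ) :
    F n + phiOp p F n = F (n / n.gcd p) := by
  by_cases h : p ∣ n
  · simp [phiOp, h, Nat.gcd_eq_right h]
  · simp [phiOp, h, (Nat.coprime_comm.mp ((hp.coprime_iff_not_dvd).mpr h)).gcd_eq_one]

lemma sum_powerset_PhiSet {P : Finset ℕ} (hP : ∀ p ∈ P, p.Prime) (F : ℕ → M) (m : ℕ) :
    ∑ I ∈ P.powerset, PhiSet I F m = F (m / m.gcd (∏ p ∈ P, p)) := by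
  induction P using Finset.induction generalizing F with
  | empty => simp [PhiSet_empty]
  | @insert a s ha ih =>
    have hPs : ∀ p ∈ s, p.Prime := fun p hp => hP p (Finset.mem_insert_of_mem hp)
    have hpair : (↑(insert a s) : Set ℕ).Pairwise Nat.Coprime :=
      fun x hx y hy hxy => (Nat.coprime_primes (hP x hx) (hP y hy)).mpr hxy
    have hinsert : ∀ I ∈ s.powerset, PhiSet (insert a I) F m = PhiSet I (phiOp a F) m := by
      intro I hI
      have hIs : I ⊆ s := Finset.mem_powerset.mp hI
      rw [PhiSet_insert (fun h => ha (hIs h)) (hpair.mono (by gcongr))]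
    have hcop : a.Coprime (∏ p ∈ s, p) :=
      Nat.Coprime.prod_right fun q hq =>
        (Nat.coprime_primes (hP a (Finset.mem_insert_self a s)) (hPs q hq)).mpr
          fun h => ha (h ▸ hq)
    rw [Finset.sum_powerset_insert ha, Finset.sum_congr rfl hinsert, ih hPs, ih hPs,
      Finset.prod_insert ha, Nat.div_gcd_mul_of_coprime hcop,
      add_phiOp_apply (hP a (Finset.mem_insert_self a s))]

end

theorem two_smul_add_sum_PhiSet_eq_general
    {M : Type*} [AddCommGroup M] (F : ℕ → M)
    (D : ℕ) (hsf : Squarefree D)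
    (m : ℕ) :
    2 • F m + ∑ I ∈ D.primeFactors.powerset.erase ∅, PhiSet I F m =
      F m + F (m / Nat.gcd m D) := by
  have hsum := Finset.add_sum_erase _ (fun I => PhiSet I F m) D.primeFactors.empty_mem_powerset
  rw [PhiSet_empty, sum_powerset_PhiSet (fun p => Nat.prime_of_mem_primeFactors) F m,
    Nat.prod_primeFactors_of_squarefree hsf] at hsum
  rw [← hsum, two_smul, add_assoc]

/-- For a squarefree positive integer `D` with set of prime
divisors `P` and any coefficient sequence `F`, for every `m > 0`:
`2·F(m) + Σ_{∅ ≠ I ⊆ P} Φ_I(F)(m) = F(m) + F(m / gcd(m, D))`. -/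
theorem two_smul_add_sum_PhiSet_eq
    {M : Type*} [AddCommGroup M] (F : ℕ → M)
    (D : ℕ) (hD : 0 < D) (hsf : Squarefree D)
    (m : ℕ) (hm : 0 < m) :
    2 • F m + ∑ I ∈ D.primeFactors.powerset.erase ∅, PhiSet I F m =
      F m + F (m / Nat.gcd m D) :=
  two_smul_add_sum_PhiSet_eq_general F D hsf m
end
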